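/- Let G be a finite group with nontrivial center Z(G). If D(G/Z(G)) = 2, then D(G) - D(Z(G)) ≥ 4. -/

import Mathlib

open Pointwise

/-- Two subgroups of `G` are conjugate. -/
def SubgroupConj {G : Type*} [Group G] (H K : Subgroup G) : Prop :=
  ∃ g : G, K = H.map (MulAut.conj g).toMonoidHom

/-- `D(G)`: the number of conjugacy classes of nontrivial subgroups of `G`
that are not self-normalizing. -/
noncomputable def DCount (G : Type*) [Group G] : ℕ :=
  Nat.card (Quot fun (H K : {H : Subgroup G // H ≠ ⊥ ∧ Subgroup.normalizer (H : Set G) ≠ H}) =>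
    SubgroupConj H.1 K.1)

/-- `D_G(N)`: the number of `G`-conjugacy classes of nontrivial, non self-normalizing
subgroups of `G` that are properly contained in `N`. -/
noncomputable def DCountIn (G : Type*) [Group G] (N : Subgroup G) : ℕ :=
  Nat.card (Quot fun (H K : {H : Subgroup G // H ≠ ⊥ ∧ Subgroup.normalizer (H : Set G) ≠ H ∧ H < N}) =>
    SubgroupConj H.1 K.1)

/-- `G` is a Frobenius group with kernel `N` and complement `H`. -/
def IsFrobeniusWith {G : Type*} [Group G] (N H : Subgroup G) : Prop :=
  H ≠ ⊥ ∧ H ≠ ⊤ ∧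
    (∀ g : G, g ∉ H → H ⊓ H.map (MulAut.conj g).toMonoidHom = ⊥) ∧
    (∀ x : G, x ∈ N ↔ ∀ g : G, g * x * g⁻¹ ∈ H → x = 1)

/-- A subgroup is elementary abelian for the prime `p`. -/
def IsElementaryAbelianSubgroup {G : Type*} [Group G] (p : ℕ) (N : Subgroup G) : Prop :=
  (∀ x ∈ N, x ^ p = 1) ∧ ∀ x ∈ N, ∀ y ∈ N, x * y = y * x

/-- The derived length of a group: the least `n` with `derivedSeries G n = ⊥`. -/
noncomputable def derivedLength (G : Type*) [Group G] : ℕ :=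
  sInf {n | derivedSeries G n = ⊥}

/-- The nilpotency class of a group: the least `n` with `lowerCentralSeries G n = ⊥`. -/
noncomputable def nilClass (G : Type*) [Group G] : ℕ :=
  sInf {n | (⊤ : Subgroup G).lowerCentralSeries n = ⊥}

section Aux

variable {G : Type*} [Group G]

lemma mem_cjmap {g x : G} {H : Subgroup G} :
    x ∈ H.map (MulAut.conj g).toMonoidHom ↔ g⁻¹ * x * g ∈ H := by
  constructor
  · rintro ⟨y, hy, rfl⟩
    simpa [MulAut.conj_apply, mul_assoc] using hy
  · intro h
    refine ⟨g⁻¹ * x * g, h, ?_⟩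
    simp [MulAut.conj_apply, mul_assoc]

lemma cjmap_cjmap (g h : G) (H : Subgroup G) :
    (H.map (MulAut.conj g).toMonoidHom).map (MulAut.conj h).toMonoidHom
      = H.map (MulAut.conj (h * g)).toMonoidHom := by
  ext x
  simp [mem_cjmap, mul_inv_rev, mul_assoc]

lemma cjmap_one (H : Subgroup G) : H.map (MulAut.conj (1 : G)).toMonoidHom = H := by
  ext x; simp [mem_cjmap]

lemma SubgroupConj.refl (H : Subgroup G) : SubgroupConj H H := ⟨1, (cjmap_one H).symm⟩

lemma SubgroupConj.symm {H K : Subgroup G} (h : SubgroupConj H K) : SubgroupConj K H := by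
  obtain ⟨g, rfl⟩ := h
  exact ⟨g⁻¹, by rw [cjmap_cjmap, inv_mul_cancel, cjmap_one]⟩

lemma SubgroupConj.trans {H K L : Subgroup G} (h1 : SubgroupConj H K) (h2 : SubgroupConj K L) :
    SubgroupConj H L := by
  obtain ⟨g, rfl⟩ := h1
  obtain ⟨g', rfl⟩ := h2
  exact ⟨g' * g, (cjmap_cjmap g g' H)⟩

lemma conjRel_equiv (P : Subgroup G → Prop) :
    Equivalence (fun H K : {H : Subgroup G // P H} => SubgroupConj H.1 K.1) :=
  ⟨fun H => SubgroupConj.refl H.1, SubgroupConj.symm, SubgroupConj.trans⟩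

lemma quot_mk_eq_iff {α : Type*} {r : α → α → Prop} (hr : Equivalence r) {a b : α} :
    Quot.mk r a = Quot.mk r b ↔ r a b := by
  rw [Quot.eq]
  exact ⟨fun h => hr.eqvGen_iff.mp h, Relation.EqvGen.rel a b⟩

lemma normal_cjmap {H : Subgroup G} (hH : H.Normal) (g : G) :
    H.map (MulAut.conj g).toMonoidHom = H := by
  ext x
  rw [mem_cjmap]
  constructor
  · intro h
    simpa [mul_assoc] using hH.conj_mem _ h g
  · intro h
    simpa [mul_assoc] using hH.conj_mem _ h g⁻¹

lemma normal_of_le_center {H : Subgroup G} (h : H ≤ Subgroup.center G) : H.Normal := by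
  constructor
  intro n hn g
  have hc : g * n = n * g := Subgroup.mem_center_iff.mp (h hn) g
  have : g * n * g⁻¹ = n := by rw [hc, mul_assoc, mul_inv_cancel, mul_one]
  rwa [this]

lemma conj_eq_self_of_le_center {H K : Subgroup G} (hH : H ≤ Subgroup.center G)
    (h : SubgroupConj H K) : K = H := by
  obtain ⟨g, rfl⟩ := h
  exact normal_cjmap (normal_of_le_center hH) g

lemma center_le_of_conj {H K : Subgroup G} (h : SubgroupConj H K)
    (hH : Subgroup.center G ≤ H) : Subgroup.center G ≤ K := by
  obtain ⟨g, rfl⟩ := h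
  intro z hz
  rw [mem_cjmap]
  have hc : g⁻¹ * z * g = z := by
    rw [Subgroup.mem_center_iff.mp hz g⁻¹, mul_assoc, inv_mul_cancel, mul_one]
  rw [hc]; exact hH hz

lemma le_center_of_conj' {H K : Subgroup G} (h : SubgroupConj H K)
    (hK : K ≤ Subgroup.center G) : H ≤ Subgroup.center G := by
  obtain ⟨g, rfl⟩ := h
  have h1 : (H.map (MulAut.conj g).toMonoidHom).map (MulAut.conj g⁻¹).toMonoidHom = H := by
    rw [cjmap_cjmap, inv_mul_cancel, cjmap_one]
  rw [← h1, normal_cjmap (normal_of_le_center hK) g⁻¹]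
  exact hK

end Aux

set_option maxHeartbeats 1000000 in
theorem stmt14 (G : Type*) [Group G] [Finite G] (hz : Subgroup.center G ≠ ⊥)
    (h2 : DCount (G ⧸ Subgroup.center G) = 2) :
    DCount ↥(Subgroup.center G) + 4 ≤ DCount G := by
  classical
  haveI : Finite (Subgroup G) :=
    Finite.of_injective (fun H : Subgroup G => (H : Set G)) SetLike.coe_injective
  haveI : Finite (Subgroup (G ⧸ (Subgroup.center G))) :=
    Finite.of_injective (fun H : Subgroup (G ⧸ (Subgroup.center G)) => (H : Set (G ⧸ (Subgroup.center G)))) SetLike.coe_injective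
  haveI : Finite (Subgroup ↥(Subgroup.center G)) :=
    Finite.of_injective (fun H : Subgroup ↥(Subgroup.center G) => (H : Set ↥(Subgroup.center G))) SetLike.coe_injective
  -- the center is proper
  have hZtop : (Subgroup.center G) ≠ ⊤ := by
    intro htop
    have hsub : ∀ x y : G ⧸ (Subgroup.center G), x = y := by
      intro x y
      obtain ⟨a, rfl⟩ := QuotientGroup.mk_surjective x
      obtain ⟨b, rfl⟩ := QuotientGroup.mk_surjective y
      rw [QuotientGroup.eq, htop]
      trivial
    have hbot : ∀ H : Subgroup (G ⧸ (Subgroup.center G)), H = ⊥ := by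
      intro H
      ext x
      rw [hsub x 1]
      simp [H.one_mem]
    have he : IsEmpty {H : Subgroup (G ⧸ (Subgroup.center G)) // H ≠ ⊥ ∧ Subgroup.normalizer (H : Set _) ≠ H} :=
      ⟨fun s => s.2.1 (hbot s.1)⟩
    have hzero : DCount (G ⧸ (Subgroup.center G)) = 0 := by
      unfold DCount
      haveI : IsEmpty (Quot fun (H K : {H : Subgroup (G ⧸ (Subgroup.center G)) // H ≠ ⊥ ∧ Subgroup.normalizer (H : Set _) ≠ H}) =>
          SubgroupConj H.1 K.1) := ⟨Quot.ind fun a => he.false a⟩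
      exact Nat.card_of_isEmpty
    rw [hzero] at h2
    exact absurd h2 (by norm_num)
  -- every subgroup not containing an element outside the center is normalized by the center
  have hZnorm : ∀ H : Subgroup G, (Subgroup.center G) ≤ Subgroup.normalizer (H : Set _) := by
    intro H z hzc
    rw [Subgroup.mem_normalizer_iff]
    intro h
    have hc : h * z = z * h := Subgroup.mem_center_iff.mp hzc h
    have : z * h * z⁻¹ = h := by rw [← hc, mul_assoc, mul_inv_cancel, mul_one]
    rw [this]
  unfold DCount at h2 ⊢
  by_cases hEx : ∃ H : Subgroup G, H ≠ ⊥ ∧ ¬ H ≤ (Subgroup.center G) ∧ ¬ (Subgroup.center G) ≤ H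
  · -- main case: there is a subgroup incomparable with the center
    obtain ⟨E, hEbot, hEnle, hEnge⟩ := hEx
    have hEnorm : Subgroup.normalizer (E : Set _) ≠ E := fun h => hEnge (h ▸ hZnorm E)
    have hZne : Subgroup.normalizer ((Subgroup.center G : Subgroup G) : Set G) ≠ (Subgroup.center G) := by
      rw [Subgroup.normalizer_eq_top_iff.mpr (normal_of_le_center le_rfl)]
      exact fun h => hZtop h.symm
    -- two non-conjugate classes in the quotient
    have hnt : Nontrivial (Quot fun (H K : {H : Subgroup (G ⧸ (Subgroup.center G)) // H ≠ ⊥ ∧ Subgroup.normalizer (H : Set _) ≠ H}) =>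
        SubgroupConj H.1 K.1) := by
      apply Finite.one_lt_card_iff_nontrivial.mp
      rw [h2]
      norm_num
    obtain ⟨q1, q2, hq12⟩ := hnt
    obtain ⟨a, rfl⟩ := Quot.exists_rep q1
    obtain ⟨b, rfl⟩ := Quot.exists_rep q2
    have hab : ¬ SubgroupConj a.1 b.1 := fun h => hq12 (Quot.sound h)
    -- properties of preimages
    have hpre : ∀ s : {H : Subgroup (G ⧸ (Subgroup.center G)) // H ≠ ⊥ ∧ Subgroup.normalizer (H : Set _) ≠ H},
        (Subgroup.comap (QuotientGroup.mk' (Subgroup.center G)) s.1 ≠ ⊥ ∧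
          Subgroup.normalizer ((Subgroup.comap (QuotientGroup.mk' (Subgroup.center G)) s.1 : Subgroup G) : Set G) ≠
            Subgroup.comap (QuotientGroup.mk' (Subgroup.center G)) s.1) ∧
        ((Subgroup.center G) ≤ Subgroup.comap (QuotientGroup.mk' (Subgroup.center G)) s.1 ∧
          ¬ Subgroup.comap (QuotientGroup.mk' (Subgroup.center G)) s.1 ≤ (Subgroup.center G)) := by
      intro s
      have hle : (Subgroup.center G) ≤ Subgroup.comap (QuotientGroup.mk' (Subgroup.center G)) s.1 := by
        intro z hzc
        have h1 : QuotientGroup.mk' (Subgroup.center G) z = 1 := (QuotientGroup.eq_one_iff z).mpr hzc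
        rw [Subgroup.mem_comap, h1]
        exact s.1.one_mem
      have hnbot : Subgroup.comap (QuotientGroup.mk' (Subgroup.center G)) s.1 ≠ ⊥ := by
        intro h
        exact hz (le_bot_iff.mp (h ▸ hle))
      have hnle : ¬ Subgroup.comap (QuotientGroup.mk' (Subgroup.center G)) s.1 ≤ (Subgroup.center G) := by
        have hsb : ¬ s.1 ≤ ⊥ := fun hle => s.2.1 (le_bot_iff.mp hle)
        obtain ⟨xb, hxb, hxb1⟩ := SetLike.not_le_iff_exists.mp hsb
        have hxbne : xb ≠ 1 := by simpa using hxb1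
        obtain ⟨x, rfl⟩ := QuotientGroup.mk'_surjective (Subgroup.center G) xb
        intro hcle
        have hx : x ∈ Subgroup.comap (QuotientGroup.mk' (Subgroup.center G)) s.1 := by
          rw [Subgroup.mem_comap]; exact hxb
        exact hxbne ((QuotientGroup.eq_one_iff x).mpr (hcle hx))
      refine ⟨⟨hnbot, ?_⟩, hle, hnle⟩
      have hlt : s.1 < Subgroup.normalizer (s.1 : Set _) := lt_of_le_of_ne Subgroup.le_normalizer (Ne.symm s.2.2)
      obtain ⟨yb, hyn, hyns⟩ := SetLike.exists_of_lt hlt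
      obtain ⟨y, rfl⟩ := QuotientGroup.mk'_surjective (Subgroup.center G) yb
      intro heq
      have hy1 : y ∈ Subgroup.normalizer ((Subgroup.comap (QuotientGroup.mk' (Subgroup.center G)) s.1 : Subgroup G) : Set G) := by
        rw [Subgroup.mem_normalizer_iff]
        intro h
        rw [Subgroup.mem_comap, Subgroup.mem_comap]
        simp only [map_mul, map_inv]
        exact Subgroup.mem_normalizer_iff.mp hyn (QuotientGroup.mk' (Subgroup.center G) h)
      have hy2 : y ∉ Subgroup.comap (QuotientGroup.mk' (Subgroup.center G)) s.1 := by
        intro hy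
        rw [Subgroup.mem_comap] at hy
        exact hyns hy
      rw [heq] at hy1
      exact hy2 hy1
    -- preimages of non-conjugate subgroups are non-conjugate
    have hCD : ¬ SubgroupConj (Subgroup.comap (QuotientGroup.mk' (Subgroup.center G)) a.1)
        (Subgroup.comap (QuotientGroup.mk' (Subgroup.center G)) b.1) := by
      rintro ⟨g, hg⟩
      apply hab
      refine ⟨QuotientGroup.mk' (Subgroup.center G) g, ?_⟩
      have hcomm : (QuotientGroup.mk' (Subgroup.center G)).comp (MulAut.conj g).toMonoidHom
          = ((MulAut.conj ((QuotientGroup.mk' (Subgroup.center G)) g)).toMonoidHom).comp (QuotientGroup.mk' (Subgroup.center G)) := by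
        ext x
        simp [MulAut.conj_apply]
      have hthis := congrArg (Subgroup.map (QuotientGroup.mk' (Subgroup.center G))) hg
      rw [Subgroup.map_comap_eq_self_of_surjective (QuotientGroup.mk'_surjective (Subgroup.center G))] at hthis
      rw [Subgroup.map_map, hcomm, ← Subgroup.map_map,
        Subgroup.map_comap_eq_self_of_surjective (QuotientGroup.mk'_surjective (Subgroup.center G))] at hthis
      exact hthis
    -- properties of subgroups of the center embedded into G
    have hZsub : ∀ s : {H : Subgroup ↥(Subgroup.center G) // H ≠ ⊥ ∧ Subgroup.normalizer (H : Set _) ≠ H},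
        (s.1.map (Subgroup.center G).subtype ≠ ⊥ ∧ Subgroup.normalizer ((s.1.map (Subgroup.center G).subtype : Subgroup G) : Set G) ≠ s.1.map (Subgroup.center G).subtype) ∧
        (s.1.map (Subgroup.center G).subtype ≤ (Subgroup.center G) ∧ s.1.map (Subgroup.center G).subtype ≠ (Subgroup.center G)) := by
      intro s
      have hle : s.1.map (Subgroup.center G).subtype ≤ (Subgroup.center G) := Subgroup.map_subtype_le s.1
      have hsne : s.1 ≠ ⊤ := by
        intro h
        apply s.2.2
        rw [h, Subgroup.normalizer_eq_top_iff.mpr]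
        infer_instance
      have hmapbot : s.1.map (Subgroup.center G).subtype ≠ ⊥ := by
        intro hmb
        apply s.2.1
        apply Subgroup.map_injective (Subgroup.center G).subtype_injective
        rw [hmb, Subgroup.map_bot]
      have hmapne : s.1.map (Subgroup.center G).subtype ≠ (Subgroup.center G) := by
        intro h
        apply hsne
        apply Subgroup.map_injective (Subgroup.center G).subtype_injective
        rw [h, ← MonoidHom.range_eq_map, Subgroup.range_subtype]
      refine ⟨⟨hmapbot, ?_⟩, hle, hmapne⟩
      rw [Subgroup.normalizer_eq_top_iff.mpr (normal_of_le_center hle)]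
      intro h
      exact hZtop (top_le_iff.mp (h ▸ hle))
    -- subgroups of the center are central in the center
    have hZc : ∀ t : Subgroup ↥(Subgroup.center G), t ≤ Subgroup.center ↥(Subgroup.center G) := by
      intro t x _
      rw [Subgroup.mem_center_iff]
      intro g
      apply Subtype.ext
      push_cast
      exact Subgroup.mem_center_iff.mp x.2 g.1
    -- elements of the injection
    have hrGeq : Equivalence (fun H K : {H : Subgroup G // H ≠ ⊥ ∧ Subgroup.normalizer (H : Set _) ≠ H} =>
        SubgroupConj H.1 K.1) := conjRel_equiv _
    let SGt := {H : Subgroup G // H ≠ ⊥ ∧ Subgroup.normalizer (H : Set _) ≠ H}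
    let SZt := {H : Subgroup ↥(Subgroup.center G) // H ≠ ⊥ ∧ Subgroup.normalizer (H : Set _) ≠ H}
    let rG := fun H K : SGt => SubgroupConj H.1 K.1
    let rZ := fun H K : SZt => SubgroupConj H.1 K.1
    let B : SGt := ⟨(Subgroup.center G), hz, hZne⟩
    let C : SGt := ⟨Subgroup.comap (QuotientGroup.mk' (Subgroup.center G)) a.1, (hpre a).1⟩
    let D : SGt := ⟨Subgroup.comap (QuotientGroup.mk' (Subgroup.center G)) b.1, (hpre b).1⟩
    let E' : SGt := ⟨E, hEbot, hEnorm⟩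
    let emb : SZt → SGt := fun s => ⟨s.1.map (Subgroup.center G).subtype, (hZsub s).1⟩
    have hwd : ∀ s t : SZt, rZ s t → Quot.mk rG (emb s) = Quot.mk rG (emb t) := by
      intro s t hst
      have h1 : t.1 = s.1 := conj_eq_self_of_le_center (hZc s.1) hst
      have h2 : s = t := Subtype.ext h1.symm
      rw [h2]
    let F : Quot rZ ⊕ Fin 4 → Quot rG :=
      Sum.elim (Quot.lift (fun s => Quot.mk rG (emb s)) hwd)
        ![Quot.mk rG B, Quot.mk rG C, Quot.mk rG D, Quot.mk rG E']
    -- helper distinctness facts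
    have hembC : ∀ (s : SZt), ¬ SubgroupConj (emb s).1 C.1 := by
      intro s h
      exact (hpre a).2.2
        ((conj_eq_self_of_le_center (hZsub s).2.1 h).trans_le (hZsub s).2.1)
    have hembD : ∀ (s : SZt), ¬ SubgroupConj (emb s).1 D.1 := by
      intro s h
      exact (hpre b).2.2
        ((conj_eq_self_of_le_center (hZsub s).2.1 h).trans_le (hZsub s).2.1)
    have hembE : ∀ (s : SZt), ¬ SubgroupConj (emb s).1 E'.1 := by
      intro s h
      exact hEnle
        ((conj_eq_self_of_le_center (hZsub s).2.1 h).trans_le (hZsub s).2.1)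
    have hembB : ∀ (s : SZt), ¬ SubgroupConj (emb s).1 B.1 :=
      fun s h => (hZsub s).2.2 (conj_eq_self_of_le_center (hZsub s).2.1 h).symm
    have hBC : ¬ SubgroupConj B.1 C.1 :=
      fun h => (hpre a).2.2 (le_of_eq (conj_eq_self_of_le_center le_rfl h))
    have hBD : ¬ SubgroupConj B.1 D.1 :=
      fun h => (hpre b).2.2 (le_of_eq (conj_eq_self_of_le_center le_rfl h))
    have hBE : ¬ SubgroupConj B.1 E'.1 :=
      fun h => hEnle (le_of_eq (conj_eq_self_of_le_center le_rfl h))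
    have hCE : ¬ SubgroupConj C.1 E'.1 :=
      fun h => hEnge (center_le_of_conj h (hpre a).2.1)
    have hDE : ¬ SubgroupConj D.1 E'.1 :=
      fun h => hEnge (center_le_of_conj h (hpre b).2.1)
    have hFinj : Function.Injective F := by
      rintro (x | i) (y | j) hxy
      · obtain ⟨s, rfl⟩ := Quot.exists_rep x
        obtain ⟨t, rfl⟩ := Quot.exists_rep y
        have h : Quot.mk rG (emb s) = Quot.mk rG (emb t) := hxy
        have hc := (quot_mk_eq_iff hrGeq).mp h
        have h1 : (emb t).1 = (emb s).1 := conj_eq_self_of_le_center (hZsub s).2.1 hc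
        have h2' : s.1 = t.1 := Subgroup.map_injective (Subgroup.center G).subtype_injective h1.symm
        rw [Subtype.ext h2']
      · exfalso
        obtain ⟨s, rfl⟩ := Quot.exists_rep x
        have h : Quot.mk rG (emb s) = (![Quot.mk rG B, Quot.mk rG C, Quot.mk rG D,
            Quot.mk rG E'] : Fin 4 → Quot rG) j := hxy
        fin_cases j
        · exact hembB s ((quot_mk_eq_iff hrGeq).mp h)
        · exact hembC s ((quot_mk_eq_iff hrGeq).mp h)
        · exact hembD s ((quot_mk_eq_iff hrGeq).mp h)
        · exact hembE s ((quot_mk_eq_iff hrGeq).mp h)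
      · exfalso
        obtain ⟨s, rfl⟩ := Quot.exists_rep y
        have h : (![Quot.mk rG B, Quot.mk rG C, Quot.mk rG D,
            Quot.mk rG E'] : Fin 4 → Quot rG) i = Quot.mk rG (emb s) := hxy
        fin_cases i
        · exact hembB s (SubgroupConj.symm ((quot_mk_eq_iff hrGeq).mp h))
        · exact hembC s (SubgroupConj.symm ((quot_mk_eq_iff hrGeq).mp h))
        · exact hembD s (SubgroupConj.symm ((quot_mk_eq_iff hrGeq).mp h))
        · exact hembE s (SubgroupConj.symm ((quot_mk_eq_iff hrGeq).mp h))
      · have h : (![Quot.mk rG B, Quot.mk rG C, Quot.mk rG D,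
            Quot.mk rG E'] : Fin 4 → Quot rG) i = (![Quot.mk rG B, Quot.mk rG C, Quot.mk rG D,
            Quot.mk rG E'] : Fin 4 → Quot rG) j := hxy
        have hij : i = j := by
          fin_cases i <;> fin_cases j <;>
            first
              | rfl
              | exact absurd ((quot_mk_eq_iff hrGeq).mp h) hBC
              | exact absurd ((quot_mk_eq_iff hrGeq).mp h) hBD
              | exact absurd ((quot_mk_eq_iff hrGeq).mp h) hBE
              | exact absurd ((quot_mk_eq_iff hrGeq).mp h) hCE
              | exact absurd ((quot_mk_eq_iff hrGeq).mp h) hDE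
              | exact absurd ((quot_mk_eq_iff hrGeq).mp h) hCD
              | exact absurd (SubgroupConj.symm ((quot_mk_eq_iff hrGeq).mp h)) hBC
              | exact absurd (SubgroupConj.symm ((quot_mk_eq_iff hrGeq).mp h)) hBD
              | exact absurd (SubgroupConj.symm ((quot_mk_eq_iff hrGeq).mp h)) hBE
              | exact absurd (SubgroupConj.symm ((quot_mk_eq_iff hrGeq).mp h)) hCE
              | exact absurd (SubgroupConj.symm ((quot_mk_eq_iff hrGeq).mp h)) hDE
              | exact absurd (SubgroupConj.symm ((quot_mk_eq_iff hrGeq).mp h)) hCD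
        rw [hij]
    have hcard := Nat.card_le_card_of_injective F hFinj
    have h4 : Nat.card (Fin 4) = 4 := by simp [Nat.card_eq_fintype_card]
    rw [Nat.card_sum, h4] at hcard
    exact hcard
  · -- degenerate case: every subgroup is comparable with the center; derive a contradiction
    exfalso
    push_neg at hEx
    have hZcard : 1 < Nat.card ↥(Subgroup.center G) := by
      rw [Subgroup.one_lt_card_iff_ne_bot]
      exact hz
    haveI : Nontrivial ↥(Subgroup.center G) := Finite.one_lt_card_iff_nontrivial.mp hZcard
    set p := (Nat.card ↥(Subgroup.center G)).minFac with hpdef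
    have hp : p.Prime := Nat.minFac_prime (by omega)
    have hpZ : p ∣ Nat.card ↥(Subgroup.center G) := Nat.minFac_dvd _
    have key1 : ∀ g : G, g ∉ (Subgroup.center G) → Nat.card ↥(Subgroup.center G) ∣ orderOf g := by
      intro g hg
      have hb : Subgroup.zpowers g ≠ ⊥ := by
        intro h
        rw [Subgroup.zpowers_eq_bot] at h
        exact hg (h ▸ (Subgroup.center G).one_mem)
      have hl : ¬ Subgroup.zpowers g ≤ (Subgroup.center G) := fun h => hg (h (Subgroup.mem_zpowers g))
      have h3 := hEx _ hb hl
      have h4 := Subgroup.card_dvd_of_le h3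
      rwa [Nat.card_zpowers] at h4
    have key2 : ∀ r : ℕ, r ∣ Nat.card ↥(Subgroup.center G) → ∀ g : G, ¬ r ∣ orderOf g → g ∈ (Subgroup.center G) := by
      intro r hr g hg
      by_contra hgZ
      exact hg (hr.trans (key1 g hgZ))
    have honep : ∀ q : ℕ, q.Prime → q ∣ Nat.card G → q = p := by
      intro q hqp hqd
      by_contra hqne
      haveI := Fact.mk hqp
      obtain ⟨x, hx⟩ := exists_prime_orderOf_dvd_card' q hqd
      have hxZ : x ∈ (Subgroup.center G) := by
        apply key2 p hpZ
        rw [hx]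
        intro h
        exact hqne ((Nat.prime_dvd_prime_iff_eq hp hqp).mp h).symm
      have hqZ : q ∣ Nat.card ↥(Subgroup.center G) := by
        have ho : orderOf (⟨x, hxZ⟩ : ↥(Subgroup.center G)) = q := by
          rw [← hx]
          exact (orderOf_injective (Subgroup.center G).subtype (Subgroup.center G).subtype_injective ⟨x, hxZ⟩).symm
        exact ho ▸ orderOf_dvd_natCard (⟨x, hxZ⟩ : ↥(Subgroup.center G))
      have hall : ∀ g : G, g ∈ (Subgroup.center G) := by
        intro g
        have hn0 : orderOf g ≠ 0 := (orderOf_pos g).ne'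
        have hdvd1 : p ^ (orderOf g).factorization p ∣ orderOf g := Nat.ordProj_dvd _ _
        have ha : g ^ (p ^ (orderOf g).factorization p) ∈ (Subgroup.center G) := by
          apply key2 p hpZ
          rw [orderOf_pow' g (pow_ne_zero _ hp.ne_zero), Nat.gcd_eq_right hdvd1]
          exact Nat.not_dvd_ordCompl hp hn0
        have hb : g ^ (orderOf g / p ^ (orderOf g).factorization p) ∈ (Subgroup.center G) := by
          apply key2 q hqZ
          have hne2 : orderOf g / p ^ (orderOf g).factorization p ≠ 0 := by
            intro h
            exact (Nat.not_dvd_ordCompl hp hn0) (by rw [h]; exact dvd_zero p)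
          rw [orderOf_pow' g hne2, Nat.gcd_eq_right (Nat.div_dvd_of_dvd hdvd1),
            Nat.div_div_self hdvd1 hn0]
          intro h
          exact hqne ((Nat.prime_dvd_prime_iff_eq hqp hp).mp (hqp.dvd_of_dvd_pow h))
        have hcop : Nat.Coprime (p ^ (orderOf g).factorization p)
            (orderOf g / p ^ (orderOf g).factorization p) :=
          Nat.Coprime.pow_left _
            ((Nat.Prime.coprime_iff_not_dvd hp).mpr (Nat.not_dvd_ordCompl hp hn0))
        have hbez := Nat.gcd_eq_gcd_ab (p ^ (orderOf g).factorization p)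
          (orderOf g / p ^ (orderOf g).factorization p)
        rw [hcop.gcd_eq_one, Nat.cast_one] at hbez
        have hg1 : g = (g ^ ((p ^ (orderOf g).factorization p : ℕ) : ℤ)) ^
              (Nat.gcdA (p ^ (orderOf g).factorization p)
                (orderOf g / p ^ (orderOf g).factorization p)) *
            (g ^ (((orderOf g / p ^ (orderOf g).factorization p : ℕ)) : ℤ)) ^
              (Nat.gcdB (p ^ (orderOf g).factorization p)
                (orderOf g / p ^ (orderOf g).factorization p)) := by
          rw [← zpow_mul, ← zpow_mul, ← zpow_add, ← hbez, zpow_one]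
        rw [hg1]
        have ha' : g ^ ((p ^ (orderOf g).factorization p : ℕ) : ℤ) ∈ (Subgroup.center G) := by
          rw [zpow_natCast]; exact ha
        have hb' : g ^ (((orderOf g / p ^ (orderOf g).factorization p : ℕ)) : ℤ) ∈ (Subgroup.center G) := by
          rw [zpow_natCast]; exact hb
        exact (Subgroup.center G).mul_mem ((Subgroup.center G).zpow_mem ha' _) ((Subgroup.center G).zpow_mem hb' _)
      exact hZtop ((Subgroup.eq_top_iff' _).mpr hall)
    haveI := Fact.mk hp
    have hPG : IsPGroup p G := by
      rw [IsPGroup.iff_card]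
      have h0 : Nat.card G ≠ 0 := Nat.card_pos.ne'
      exact ⟨_, Nat.eq_prime_pow_of_unique_prime_dvd h0 (fun hd hdvd => honep _ hd hdvd)⟩
    have hPQ : IsPGroup p (G ⧸ (Subgroup.center G)) := hPG.to_quotient (Subgroup.center G)
    obtain ⟨w, hw⟩ : ∃ w : G, w ∉ (Subgroup.center G) := by
      by_contra h
      push_neg at h
      exact hZtop ((Subgroup.eq_top_iff' _).mpr h)
    haveI hQnt : Nontrivial (G ⧸ (Subgroup.center G)) :=
      ⟨⟨(w : G ⧸ (Subgroup.center G)), 1, fun h => hw ((QuotientGroup.eq_one_iff w).mp h)⟩⟩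
    have hnc : ∀ x : G ⧸ (Subgroup.center G), Subgroup.zpowers x ≠ ⊤ := by
      intro x hx
      haveI : IsCyclic (G ⧸ (Subgroup.center G)) := by
        refine ⟨x, fun y => ?_⟩
        have hy : y ∈ Subgroup.zpowers x := by rw [hx]; trivial
        rw [Subgroup.mem_zpowers_iff] at hy
        exact hy
      have hcomm := commutative_of_cyclic_center_quotient (QuotientGroup.mk' (Subgroup.center G))
        (by rw [QuotientGroup.ker_mk'])
      exact hZtop ((Subgroup.eq_top_iff' _).mpr
        (fun u => Subgroup.mem_center_iff.mpr (fun g => hcomm g u)))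
    haveI := hPQ.isNilpotent
    have hNC : NormalizerCondition (G ⧸ (Subgroup.center G)) := normalizerCondition_of_isNilpotent
    have hco : ∀ H : Subgroup (G ⧸ (Subgroup.center G)), H = ⊤ ∨ ∃ M, IsCoatom M ∧ H ≤ M := fun H =>
      eq_top_or_exists_le_coatom H
    obtain ⟨M1, hM1, -⟩ : ∃ M : Subgroup (G ⧸ (Subgroup.center G)), IsCoatom M ∧ (⊥ : Subgroup (G ⧸ (Subgroup.center G))) ≤ M := by
      rcases hco ⊥ with h | h
      · exact absurd h bot_ne_top
      · exact h
    obtain ⟨g2, hg2⟩ : ∃ g2 : G ⧸ (Subgroup.center G), g2 ∉ M1 := by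
      by_contra h
      push_neg at h
      exact hM1.1 ((Subgroup.eq_top_iff' _).mpr h)
    obtain ⟨M2, hM2, hg2M2⟩ : ∃ M : Subgroup (G ⧸ (Subgroup.center G)), IsCoatom M ∧ Subgroup.zpowers g2 ≤ M := by
      rcases hco (Subgroup.zpowers g2) with h | h
      · exact absurd h (hnc g2)
      · exact h
    have hg2M2' : g2 ∈ M2 := hg2M2 (Subgroup.mem_zpowers g2)
    have hM12 : M1 ≠ M2 := fun h => hg2 (h ▸ hg2M2')
    have hM1nleM2 : ¬ M1 ≤ M2 := by
      intro hle
      exact hM2.1 (hM1.2 M2 (lt_of_le_of_ne hle hM12))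
    obtain ⟨c, hcM1, hcM2⟩ := SetLike.not_le_iff_exists.mp hM1nleM2
    have hg3M1 : c * g2 ∉ M1 := by
      intro h
      exact hg2 (by simpa using M1.mul_mem (M1.inv_mem hcM1) h)
    have hg3M2 : c * g2 ∉ M2 := by
      intro h
      exact hcM2 (by simpa using M2.mul_mem h (M2.inv_mem hg2M2'))
    obtain ⟨M3, hM3, hg3M3⟩ : ∃ M : Subgroup (G ⧸ (Subgroup.center G)), IsCoatom M ∧
        Subgroup.zpowers (c * g2) ≤ M := by
      rcases hco (Subgroup.zpowers (c * g2)) with h | h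
      · exact absurd h (hnc _)
      · exact h
    have hg3M3' : c * g2 ∈ M3 := hg3M3 (Subgroup.mem_zpowers _)
    have hM13 : M1 ≠ M3 := fun h => hg3M1 (h ▸ hg3M3')
    have hM23 : M2 ≠ M3 := fun h => hg3M2 (h ▸ hg3M3')
    have hMne : ∀ M : Subgroup (G ⧸ (Subgroup.center G)), IsCoatom M → M ≠ ⊥ := by
      intro M hM hMb
      subst hMb
      obtain ⟨y, hy⟩ := exists_ne (1 : G ⧸ (Subgroup.center G))
      refine hnc y (hM.2 _ (lt_of_le_of_ne bot_le (Ne.symm ?_)))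
      simp only [ne_eq, Subgroup.zpowers_eq_bot]
      exact hy
    have hMnorm : ∀ M : Subgroup (G ⧸ (Subgroup.center G)), IsCoatom M → (Subgroup.normalizer (M : Set _) ≠ M ∧ M.Normal) := by
      intro M hM
      have hlt : M < Subgroup.normalizer (M : Set _) := hNC M (lt_top_iff_ne_top.mpr hM.1)
      exact ⟨hlt.ne', Subgroup.normalizer_eq_top_iff.mp (hM.2 _ hlt)⟩
    have hrQeq : Equivalence (fun H K : {H : Subgroup (G ⧸ (Subgroup.center G)) // H ≠ ⊥ ∧ Subgroup.normalizer (H : Set _) ≠ H} =>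
        SubgroupConj H.1 K.1) := conjRel_equiv _
    let SQt := {H : Subgroup (G ⧸ (Subgroup.center G)) // H ≠ ⊥ ∧ Subgroup.normalizer (H : Set _) ≠ H}
    let rQ := fun H K : SQt => SubgroupConj H.1 K.1
    let s1 : SQt := ⟨M1, hMne _ hM1, (hMnorm _ hM1).1⟩
    let s2 : SQt := ⟨M2, hMne _ hM2, (hMnorm _ hM2).1⟩
    let s3 : SQt := ⟨M3, hMne _ hM3, (hMnorm _ hM3).1⟩
    have hdist : ∀ u v : SQt, u.1.Normal → Quot.mk rQ u = Quot.mk rQ v → u.1 = v.1 := by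
      intro u v hn h
      obtain ⟨g, hg⟩ := (quot_mk_eq_iff hrQeq).mp h
      rw [hg, normal_cjmap hn]
    have hne12 : Quot.mk rQ s1 ≠ Quot.mk rQ s2 := fun h => hM12 (hdist _ _ (hMnorm _ hM1).2 h)
    have hne13 : Quot.mk rQ s1 ≠ Quot.mk rQ s3 := fun h => hM13 (hdist _ _ (hMnorm _ hM1).2 h)
    have hne23 : Quot.mk rQ s2 ≠ Quot.mk rQ s3 := fun h => hM23 (hdist _ _ (hMnorm _ hM2).2 h)
    let f3 : Fin 3 → Quot rQ := ![Quot.mk rQ s1, Quot.mk rQ s2, Quot.mk rQ s3]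
    have hf3 : Function.Injective f3 := by
      intro i j hij
      fin_cases i <;> fin_cases j <;>
        first
          | rfl
          | exact absurd hij hne12
          | exact absurd hij hne13
          | exact absurd hij hne23
          | exact absurd hij.symm hne12
          | exact absurd hij.symm hne13
          | exact absurd hij.symm hne23
    have hle3 := Nat.card_le_card_of_injective f3 hf3
    rw [h2, Nat.card_eq_fintype_card, Fintype.card_fin] at hle3
    omega
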